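/- Unobservable-quotient preserves input-output behavior: let K_v be a matrix whose columns form an orthonormal basis of C_v^⊥ (the orthogonal complement of the unobservable subspace at node v), and define the reduced system with edge matrices (K_vᵀ A_σ K_u, K_vᵀ B_σ, C_σ K_u, D_σ) for each edge (u,v,σ). Then for every finite path π and every input sequence w, the output of the reduced system started at 0 equals the output of the original system started at 0; hence the L_p-gains coincide. -/

import Mathlib

open Matrix

/-- Input-driven state of a rectangular switching system, from zero initial state. -/
def rstate {V Λ : Type*} (nd : V → ℕ) {d : ℕ} (src tgt : Λ → V)
    (A : (σ : Λ) → Matrix (Fin (nd (tgt σ))) (Fin (nd (src σ))) ℝ)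
    (B : (σ : Λ) → Matrix (Fin (nd (tgt σ))) (Fin d) ℝ)
    (σseq : ℕ → Λ) (hch : ∀ t, tgt (σseq t) = src (σseq (t + 1)))
    (w : ℕ → Fin d → ℝ) : (t : ℕ) → Fin (nd (src (σseq t))) → ℝ
  | 0 => 0
  | t + 1 => cast (congrArg (fun u => Fin (nd u) → ℝ) (hch t))
      ((A (σseq t)).mulVec (rstate nd src tgt A B σseq hch w t)
        + (B (σseq t)).mulVec (w t))

/-- Zero-input state propagation from an arbitrary initial state. -/
def fstate {V Λ : Type*} (nd : V → ℕ) (src tgt : Λ → V)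
    (A : (σ : Λ) → Matrix (Fin (nd (tgt σ))) (Fin (nd (src σ))) ℝ)
    (σseq : ℕ → Λ) (hch : ∀ t, tgt (σseq t) = src (σseq (t + 1)))
    (x : Fin (nd (src (σseq 0))) → ℝ) : (t : ℕ) → Fin (nd (src (σseq t))) → ℝ
  | 0 => x
  | t + 1 => cast (congrArg (fun u => Fin (nd u) → ℝ) (hch t))
      ((A (σseq t)).mulVec (fstate nd src tgt A σseq hch x t))

/-- The unobservable set at node `v`: initial states producing zero output along
every admissible path starting at `v`, with zero input. -/
def unobsSet {V Λ : Type*} (nd : V → ℕ) {m : ℕ} (src tgt : Λ → V) (Efin : Finset Λ)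
    (A : (σ : Λ) → Matrix (Fin (nd (tgt σ))) (Fin (nd (src σ))) ℝ)
    (C : (σ : Λ) → Matrix (Fin m) (Fin (nd (src σ))) ℝ)
    (v : V) : Set (Fin (nd v) → ℝ) :=
  {x | ∀ (T : ℕ) (σseq : ℕ → Λ) (hch : ∀ t, tgt (σseq t) = src (σseq (t + 1)))
      (h0 : src (σseq 0) = v), (∀ t < T, σseq t ∈ Efin) →
      ∀ t < T, (C (σseq t)).mulVec
        (fstate nd src tgt A σseq hch
          (cast (congrArg (fun u => Fin (nd u) → ℝ) h0.symm) x) t) = 0}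

section Aux

variable {V Λ : Type*} (nd : V → ℕ)

lemma castd_zero {a b : V} (h : a = b) :
    cast (congrArg (fun u => Fin (nd u) → ℝ) h) (0 : Fin (nd a) → ℝ) = 0 := by
  subst h; rfl

lemma castd_add {a b : V} (h : a = b) (x y : Fin (nd a) → ℝ) :
    cast (congrArg (fun u => Fin (nd u) → ℝ) h) (x + y)
      = cast (congrArg (fun u => Fin (nd u) → ℝ) h) x
        + cast (congrArg (fun u => Fin (nd u) → ℝ) h) y := by
  subst h; rfl

lemma castd_smul {a b : V} (h : a = b) (c : ℝ) (x : Fin (nd a) → ℝ) :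
    cast (congrArg (fun u => Fin (nd u) → ℝ) h) (c • x)
      = c • cast (congrArg (fun u => Fin (nd u) → ℝ) h) x := by
  subst h; rfl

variable (src tgt : Λ → V)
  (A : (σ : Λ) → Matrix (Fin (nd (tgt σ))) (Fin (nd (src σ))) ℝ)
  (σseq : ℕ → Λ) (hch : ∀ t, tgt (σseq t) = src (σseq (t + 1)))

lemma fstate_zero (t : ℕ) : fstate nd src tgt A σseq hch 0 t = 0 := by
  induction t with
  | zero => rfl
  | succ t ih => simp only [fstate, ih, Matrix.mulVec_zero]; exact castd_zero nd (hch t)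

lemma fstate_add (x y : Fin (nd (src (σseq 0))) → ℝ) (t : ℕ) :
    fstate nd src tgt A σseq hch (x + y) t
      = fstate nd src tgt A σseq hch x t + fstate nd src tgt A σseq hch y t := by
  induction t with
  | zero => rfl
  | succ t ih => simp only [fstate, ih, Matrix.mulVec_add]; exact castd_add nd (hch t) _ _

lemma fstate_smul (c : ℝ) (x : Fin (nd (src (σseq 0))) → ℝ) (t : ℕ) :
    fstate nd src tgt A σseq hch (c • x) t
      = c • fstate nd src tgt A σseq hch x t := by
  induction t with
  | zero => rfl
  | succ t ih => simp only [fstate, ih, Matrix.mulVec_smul]; exact castd_smul nd (hch t) _ _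

lemma fstate_shift (x : Fin (nd (src (σseq 0))) → ℝ) (t : ℕ) :
    fstate nd src tgt A σseq hch x (t + 1)
      = fstate nd src tgt A (fun s => σseq (s + 1)) (fun s => hch (s + 1))
          (cast (congrArg (fun u => Fin (nd u) → ℝ) (hch 0))
            ((A (σseq 0)).mulVec x)) t := by
  induction t with
  | zero => rfl
  | succ t ih =>
      show cast (congrArg (fun u => Fin (nd u) → ℝ) (hch (t+1)))
          ((A (σseq (t+1))).mulVec (fstate nd src tgt A σseq hch x (t+1))) = _
      rw [ih]; rfl

variable {m : ℕ} (Efin : Finset Λ)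
  (C : (σ : Λ) → Matrix (Fin m) (Fin (nd (src σ))) ℝ)

/-- The unobservable set as a submodule of Euclidean space. -/
def unobsSub (v : V) : Submodule ℝ (Fin (nd v) → ℝ) where
  carrier := unobsSet nd src tgt Efin A C v
  zero_mem' := by
    intro T τ hchτ h0 hE t ht
    rw [castd_zero nd h0.symm, fstate_zero, Matrix.mulVec_zero]
  add_mem' := by
    intro x y hx hy T τ hchτ h0 hE t ht
    have hx' := hx T τ hchτ h0 hE t ht
    have hy' := hy T τ hchτ h0 hE t ht
    show (C (τ t)).mulVec (fstate nd src tgt A τ hchτ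
      (cast (congrArg (fun u => Fin (nd u) → ℝ) h0.symm) (x + y)) t) = 0
    rw [castd_add nd h0.symm, fstate_add, Matrix.mulVec_add, hx', hy', add_zero]
  smul_mem' := by
    intro c x hx T τ hchτ h0 hE t ht
    have hx' := hx T τ hchτ h0 hE t ht
    show (C (τ t)).mulVec (fstate nd src tgt A τ hchτ
      (cast (congrArg (fun u => Fin (nd u) → ℝ) h0.symm) (c • x)) t) = 0
    rw [castd_smul nd h0.symm, fstate_smul, Matrix.mulVec_smul, hx', smul_zero]

lemma castd_mem_unobs {a b : V} (h : a = b) (x : Fin (nd a) → ℝ)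
    (hx : x ∈ unobsSet nd src tgt Efin A C a) :
    cast (congrArg (fun u => Fin (nd u) → ℝ) h) x ∈ unobsSet nd src tgt Efin A C b := by
  subst h; exact hx

lemma castd_sub_mulVec (md : V → ℕ) (K : (v : V) → Matrix (Fin (nd v)) (Fin (md v)) ℝ)
    {a b : V} (h : a = b) (y : Fin (nd a) → ℝ) (q : Fin (md a) → ℝ) :
    cast (congrArg (fun u => Fin (nd u) → ℝ) h) y
        - (K b).mulVec (cast (congrArg (fun u => Fin (md u) → ℝ) h) q)
      = cast (congrArg (fun u => Fin (nd u) → ℝ) h) (y - (K a).mulVec q) := by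
  subst h; rfl

/-- Projection onto the orthocomplement of `unobsSet` changes a vector only by
an element of `unobsSet`. -/
lemma proj_mem_unobs (md : V → ℕ) (K : (v : V) → Matrix (Fin (nd v)) (Fin (md v)) ℝ)
    (horth : ∀ v, (K v)ᵀ * K v = 1)
    (hrange : ∀ (v : V) (x : Fin (nd v) → ℝ),
      (∃ y, (K v).mulVec y = x) ↔
      ∀ c ∈ unobsSet nd src tgt Efin A C v, ∑ i, x i * c i = 0)
    (v : V) (y : Fin (nd v) → ℝ) :
    y - (K v).mulVec ((K v)ᵀ.mulVec y) ∈ unobsSet nd src tgt Efin A C v := by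
  set W : Submodule ℝ (EuclideanSpace ℝ (Fin (nd v))) :=
    (unobsSub nd src tgt A Efin C v).comap
      (WithLp.linearEquiv 2 ℝ (Fin (nd v) → ℝ)).toLinearMap with hW
  have hWmem : ∀ u : EuclideanSpace ℝ (Fin (nd v)),
      u ∈ W ↔ u.ofLp ∈ unobsSet nd src tgt Efin A C v := fun u => Iff.rfl
  have horthW : ∀ x : EuclideanSpace ℝ (Fin (nd v)),
      (∃ q, (K v).mulVec q = x.ofLp) ↔ x ∈ Wᗮ := by
    intro x
    rw [hrange v x.ofLp, Submodule.mem_orthogonal]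
    constructor
    · intro h u hu
      have := h u.ofLp ((hWmem u).mp hu)
      simpa [PiLp.inner_apply, RCLike.inner_apply, mul_comm] using this
    · intro h c hc
      have := h (WithLp.toLp 2 c) ((hWmem _).mpr hc)
      simpa [PiLp.inner_apply, RCLike.inner_apply, mul_comm] using this
  set z : EuclideanSpace ℝ (Fin (nd v)) :=
    WithLp.toLp 2 (y - (K v).mulVec ((K v)ᵀ.mulVec y)) with hz
  have hKz : (K v)ᵀ.mulVec z.ofLp = 0 := by
    show (K v)ᵀ.mulVec (y - (K v).mulVec ((K v)ᵀ.mulVec y)) = 0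
    rw [Matrix.mulVec_sub, Matrix.mulVec_mulVec, Matrix.mulVec_mulVec,
      horth v, Matrix.one_mul, sub_self]
  have hzmem : z ∈ Wᗮᗮ := by
    rw [Submodule.mem_orthogonal]
    intro u hu
    obtain ⟨q, hq⟩ := (horthW u).mpr hu
    have hin : inner ℝ u z = u.ofLp ⬝ᵥ z.ofLp := by
      simp [PiLp.inner_apply, dotProduct, mul_comm]
    rw [hin, ← hq]
    calc ((K v).mulVec q) ⬝ᵥ z.ofLp = z.ofLp ⬝ᵥ ((K v).mulVec q) := dotProduct_comm _ _
      _ = (z.ofLp ᵥ* (K v)) ⬝ᵥ q := Matrix.dotProduct_mulVec _ _ _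
      _ = ((K v)ᵀ.mulVec z.ofLp) ⬝ᵥ q := by rw [Matrix.mulVec_transpose]
      _ = 0 := by rw [hKz, zero_dotProduct]
  rw [Submodule.orthogonal_orthogonal] at hzmem
  exact (hWmem z).mp hzmem

/-- Invariance: `A σ` maps the unobservable set at `src σ` into the one at `tgt σ`. -/
lemma unobs_invariant (σ : Λ) (hσ : σ ∈ Efin) (x : Fin (nd (src σ)) → ℝ)
    (hx : x ∈ unobsSet nd src tgt Efin A C (src σ)) :
    (A σ).mulVec x ∈ unobsSet nd src tgt Efin A C (tgt σ) := by
  intro T τ hchτ h0 hE t ht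
  set σ' : ℕ → Λ := fun s => Nat.casesOn s σ (fun s => τ s) with hσ'
  have hch' : ∀ s, tgt (σ' s) = src (σ' (s + 1)) := by
    intro s
    cases s with
    | zero => exact h0.symm
    | succ s => exact hchτ s
  have hE' : ∀ s < T + 1, σ' s ∈ Efin := by
    intro s hs
    cases s with
    | zero => exact hσ
    | succ s => exact hE s (by omega)
  have hmain := hx (T + 1) σ' hch' rfl hE' (t + 1) (by omega)
  rw [fstate_shift] at hmain
  exact hmain

/-- Along an admissible chain, the output matrix annihilates unobservable states. -/
lemma unobs_output_zero (hchh : ∀ t, tgt (σseq t) = src (σseq (t + 1))) (t : ℕ)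
    (hσ : σseq t ∈ Efin) (x : Fin (nd (src (σseq t))) → ℝ)
    (hx : x ∈ unobsSet nd src tgt Efin A C (src (σseq t))) :
    (C (σseq t)).mulVec x = 0 := by
  have := hx 1 (fun s => σseq (t + s)) (fun s => hchh (t + s)) rfl
    (by intro s hs; interval_cases s; exact hσ) 0 (by omega)
  exact this

end Aux

/-- quotienting by the unobservable subspaces (via orthonormal
bases `K_v` of `C_v^⊥`) preserves the input-output behavior from zero initial
state, and hence the L_p-gain. -/
theorem stmt13 {V Λ : Type*} (nd md : V → ℕ) {d m : ℕ} (src tgt : Λ → V)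
    (Efin : Finset Λ)
    (A : (σ : Λ) → Matrix (Fin (nd (tgt σ))) (Fin (nd (src σ))) ℝ)
    (B : (σ : Λ) → Matrix (Fin (nd (tgt σ))) (Fin d) ℝ)
    (C : (σ : Λ) → Matrix (Fin m) (Fin (nd (src σ))) ℝ)
    (D : (σ : Λ) → Matrix (Fin m) (Fin d) ℝ)
    (p : ℝ) (hp : 1 ≤ p)
    (K : (v : V) → Matrix (Fin (nd v)) (Fin (md v)) ℝ)
    (horth : ∀ v, (K v)ᵀ * K v = 1)
    (hrange : ∀ (v : V) (x : Fin (nd v) → ℝ),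
      (∃ y, (K v).mulVec y = x) ↔
      ∀ c ∈ unobsSet nd src tgt Efin A C v, ∑ i, x i * c i = 0) :
    (∀ (T : ℕ) (σseq : ℕ → Λ) (hch : ∀ t, tgt (σseq t) = src (σseq (t + 1)))
      (w : ℕ → Fin d → ℝ), (∀ t < T, σseq t ∈ Efin) → ∀ t < T,
      (C (σseq t)).mulVec (rstate nd src tgt A B σseq hch w t)
          + (D (σseq t)).mulVec (w t)
        = (C (σseq t) * K (src (σseq t))).mulVec
            (rstate md src tgt (fun σ => (K (tgt σ))ᵀ * A σ * K (src σ))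
              (fun σ => (K (tgt σ))ᵀ * B σ) σseq hch w t)
          + (D (σseq t)).mulVec (w t))
    ∧
    {γ : ℝ | 0 ≤ γ ∧ ∀ (T : ℕ) (σseq : ℕ → Λ)
        (hch : ∀ t, tgt (σseq t) = src (σseq (t + 1))) (w : ℕ → Fin d → ℝ),
        (∀ t < T, σseq t ∈ Efin) →
        ∑ t ∈ Finset.range T, ∑ i,
            |((C (σseq t)).mulVec (rstate nd src tgt A B σseq hch w t)
              + (D (σseq t)).mulVec (w t)) i| ^ p
          ≤ γ ^ p * ∑ t ∈ Finset.range T, ∑ i, |w t i| ^ p}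
    = {γ : ℝ | 0 ≤ γ ∧ ∀ (T : ℕ) (σseq : ℕ → Λ)
        (hch : ∀ t, tgt (σseq t) = src (σseq (t + 1))) (w : ℕ → Fin d → ℝ),
        (∀ t < T, σseq t ∈ Efin) →
        ∑ t ∈ Finset.range T, ∑ i,
            |((C (σseq t) * K (src (σseq t))).mulVec
                (rstate md src tgt (fun σ => (K (tgt σ))ᵀ * A σ * K (src σ))
                  (fun σ => (K (tgt σ))ᵀ * B σ) σseq hch w t)
              + (D (σseq t)).mulVec (w t)) i| ^ p
          ≤ γ ^ p * ∑ t ∈ Finset.range T, ∑ i, |w t i| ^ p} := by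
  have state : ∀ (σseq : ℕ → Λ) (hch : ∀ t, tgt (σseq t) = src (σseq (t + 1)))
      (w : ℕ → Fin d → ℝ) (t : ℕ), (∀ s < t, σseq s ∈ Efin) →
      rstate nd src tgt A B σseq hch w t
        - (K (src (σseq t))).mulVec
            (rstate md src tgt (fun σ => (K (tgt σ))ᵀ * A σ * K (src σ))
              (fun σ => (K (tgt σ))ᵀ * B σ) σseq hch w t)
        ∈ unobsSet nd src tgt Efin A C (src (σseq t)) := by
    intro σseq hch w t
    induction t with
    | zero =>
        intro _
        show (0 : Fin (nd (src (σseq 0))) → ℝ) - (K (src (σseq 0))).mulVec 0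
          ∈ unobsSet nd src tgt Efin A C (src (σseq 0))
        rw [Matrix.mulVec_zero, sub_zero]
        exact (unobsSub nd src tgt A Efin C (src (σseq 0))).zero_mem
    | succ t ih =>
        intro hE
        have hEt : σseq t ∈ Efin := hE t (by omega)
        have ih' := ih (fun s hs => hE s (by omega))
        simp only [rstate]
        rw [castd_sub_mulVec nd md K (hch t)]
        apply castd_mem_unobs nd src tgt A Efin C (hch t)
        set x := rstate nd src tgt A B σseq hch w t with hx
        set z := rstate md src tgt (fun σ => (K (tgt σ))ᵀ * A σ * K (src σ))
          (fun σ => (K (tgt σ))ᵀ * B σ) σseq hch w t with hzdef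
        have hKz : (K (src (σseq t))).mulVec z = x - (x - (K (src (σseq t))).mulVec z) := by
          rw [sub_sub_cancel]
        have hexp : ((K (tgt (σseq t)))ᵀ * A (σseq t) * K (src (σseq t))).mulVec z
            = (K (tgt (σseq t)))ᵀ.mulVec ((A (σseq t)).mulVec ((K (src (σseq t))).mulVec z)) := by
          rw [Matrix.mulVec_mulVec, Matrix.mulVec_mulVec, Matrix.mul_assoc]
        have hexp2 : ((K (tgt (σseq t)))ᵀ * B (σseq t)).mulVec (w t)
            = (K (tgt (σseq t)))ᵀ.mulVec ((B (σseq t)).mulVec (w t)) := by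
          rw [Matrix.mulVec_mulVec]
        set e := x - (K (src (σseq t))).mulVec z with he
        have h1 := proj_mem_unobs nd src tgt A Efin C md K horth hrange (tgt (σseq t))
          ((A (σseq t)).mulVec x + (B (σseq t)).mulVec (w t))
        have h2 := proj_mem_unobs nd src tgt A Efin C md K horth hrange (tgt (σseq t))
          ((A (σseq t)).mulVec e)
        have h3 : (A (σseq t)).mulVec e ∈ unobsSet nd src tgt Efin A C (tgt (σseq t)) :=
          unobs_invariant nd src tgt A Efin C (σseq t) hEt e ih'
        rw [hexp, hexp2, hKz]
        have key : ((A (σseq t)).mulVec x + (B (σseq t)).mulVec (w t))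
            - (K (tgt (σseq t))).mulVec
                ((K (tgt (σseq t)))ᵀ.mulVec ((A (σseq t)).mulVec (x - e))
                  + (K (tgt (σseq t)))ᵀ.mulVec ((B (σseq t)).mulVec (w t)))
          = ((((A (σseq t)).mulVec x + (B (σseq t)).mulVec (w t))
                - (K (tgt (σseq t))).mulVec ((K (tgt (σseq t)))ᵀ.mulVec
                    ((A (σseq t)).mulVec x + (B (σseq t)).mulVec (w t))))
              - (((A (σseq t)).mulVec e)
                - (K (tgt (σseq t))).mulVec ((K (tgt (σseq t)))ᵀ.mulVec
                    ((A (σseq t)).mulVec e))))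
            + (A (σseq t)).mulVec e := by
          simp only [Matrix.mulVec_sub, Matrix.mulVec_add]
          abel
        rw [key]
        exact (unobsSub nd src tgt A Efin C (tgt (σseq t))).add_mem
          ((unobsSub nd src tgt A Efin C (tgt (σseq t))).sub_mem h1 h2) h3
  have main : ∀ (T : ℕ) (σseq : ℕ → Λ) (hch : ∀ t, tgt (σseq t) = src (σseq (t + 1)))
      (w : ℕ → Fin d → ℝ), (∀ t < T, σseq t ∈ Efin) → ∀ t < T,
      (C (σseq t)).mulVec (rstate nd src tgt A B σseq hch w t)
          + (D (σseq t)).mulVec (w t)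
        = (C (σseq t) * K (src (σseq t))).mulVec
            (rstate md src tgt (fun σ => (K (tgt σ))ᵀ * A σ * K (src σ))
              (fun σ => (K (tgt σ))ᵀ * B σ) σseq hch w t)
          + (D (σseq t)).mulVec (w t) := by
    intro T σseq hch w hE t ht
    have hst := state σseq hch w t (fun s hs => hE s (lt_trans hs ht))
    have hC0 := unobs_output_zero nd src tgt A σseq Efin C hch t (hE t ht) _ hst
    rw [Matrix.mulVec_sub, sub_eq_zero, Matrix.mulVec_mulVec] at hC0
    rw [hC0]
  refine ⟨main, ?_⟩
  have hsum : ∀ (T : ℕ) (σseq : ℕ → Λ) (hch : ∀ t, tgt (σseq t) = src (σseq (t + 1)))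
      (w : ℕ → Fin d → ℝ), (∀ t < T, σseq t ∈ Efin) →
      (∑ t ∈ Finset.range T, ∑ i,
          |((C (σseq t)).mulVec (rstate nd src tgt A B σseq hch w t)
            + (D (σseq t)).mulVec (w t)) i| ^ p)
        = ∑ t ∈ Finset.range T, ∑ i,
          |((C (σseq t) * K (src (σseq t))).mulVec
              (rstate md src tgt (fun σ => (K (tgt σ))ᵀ * A σ * K (src σ))
                (fun σ => (K (tgt σ))ᵀ * B σ) σseq hch w t)
            + (D (σseq t)).mulVec (w t)) i| ^ p := by
    intro T σseq hch w hE
    refine Finset.sum_congr rfl fun t ht => ?_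
    rw [main T σseq hch w hE t (Finset.mem_range.mp ht)]
  ext γ
  simp only [Set.mem_setOf_eq]
  constructor
  · rintro ⟨h0, h⟩
    exact ⟨h0, fun T σseq hch w hE => by
      rw [← hsum T σseq hch w hE]; exact h T σseq hch w hE⟩
  · rintro ⟨h0, h⟩
    exact ⟨h0, fun T σseq hch w hE => by
      rw [hsum T σseq hch w hE]; exact h T σseq hch w hE⟩
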